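/- arXiv:2509.18744 — 2 statements merged into one kernel-verified Lean document; each statement's English description precedes it below -/
import Mathlib

section
/- Let w_1,…,w_{J} > 0 be positive reals and b_1,…,b_J ∈ ℝ satisfy b_1/w_1 ≥ b_2/w_2 ≥ ⋯ ≥ b_J/w_J. Let σ(t) = max(t,0). Then for all y ∈ ℝ, the nested expression σ(⋯σ(σ(w_1 y − b_1) + w_2 y − b_2)⋯ + w_J y − b_J) equals the sum Σ_{j=1}^{J} σ(w_j y − b_j). -/
/-- The ReLU function `σ(t) = max(t,0)`. -/
def relu (t : ℝ) : ℝ := max t 0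

/-- The nested expression `A_1 = σ(w_1 y − b_1)`, `A_{k+1} = σ(A_k + w_{k+1} y − b_{k+1})`
(0-indexed: `nested w b y k` is `A_k`, with `nested w b y 0 = 0`). -/
def nested (w b : ℕ → ℝ) (y : ℝ) : ℕ → ℝ
  | 0 => 0
  | k + 1 => relu (nested w b y k + w k * y - b k)

/-!
Induction on `J`. Write `S` for the sum of the first `J` terms, which is `≥ 0`. If the new
pre-activation `w_J y − b_J` is nonnegative, then `σ(S + w_J y − b_J) = S + σ(w_J y − b_J)`
trivially. If it is negative, then `y < b_J / w_J ≤ b_j / w_j` for all `j < J`, so every earlier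
pre-activation is negative as well, `S = 0`, and both sides vanish.
-/

lemma relu_nonneg (t : ℝ) : 0 ≤ relu t := le_max_right t 0

lemma relu_of_nonpos {t : ℝ} (ht : t ≤ 0) : relu t = 0 := max_eq_right ht

lemma relu_add_eq_add_relu {s t : ℝ} (hs : 0 ≤ s) (hst : t < 0 → s = 0) :
    relu (s + t) = s + relu t := by
  rcases le_or_gt 0 t with ht | ht
  · rw [relu, relu, max_eq_left ht, max_eq_left (add_nonneg hs ht)]
  · rw [hst ht, zero_add, zero_add]

lemma sub_neg_of_div_le_div {w b w' b' y : ℝ} (hw : 0 < w) (hw' : 0 < w')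
    (hdiv : b' / w' ≤ b / w) (h' : w' * y - b' < 0) : w * y - b < 0 := by
  have hy : y < b' / w' := by rw [lt_div_iff₀ hw']; linarith
  have : y * w < b := (lt_div_iff₀ hw).1 (hy.trans_le hdiv)
  linarith

/-- **Collapsing of nested ReLUs.** If all weights `w_j` (for `j < J`) are positive and
the thresholds `b_j / w_j` are nonincreasing in `j`, then the nested expression
`σ(⋯σ(σ(w_1 y − b_1) + w_2 y − b_2)⋯ + w_J y − b_J)` equals `Σ_{j<J} σ(w_j y − b_j)`,
for every `y ∈ ℝ`. -/
theorem nested_relu_eq_sum (J : ℕ) (w b : ℕ → ℝ)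
    (hw : ∀ j, j < J → 0 < w j)
    (hmono : ∀ j k, j ≤ k → k < J → b k / w k ≤ b j / w j)
    (y : ℝ) :
    nested w b y J = ∑ j ∈ Finset.range J, relu (w j * y - b j) := by
  induction J with
  | zero => rfl
  | succ k ih =>
    have hk : k < k + 1 := k.lt_succ_self
    have ih := ih (fun j hj => hw j (hj.trans hk))
      (fun j l hjl hl => hmono j l hjl (hl.trans hk))
    have hsum_eq_zero (hneg : w k * y - b k < 0) :
        ∑ j ∈ Finset.range k, relu (w j * y - b j) = 0 := by
      refine Finset.sum_eq_zero fun j hj => relu_of_nonpos (le_of_lt ?_)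
      have hj : j < k := Finset.mem_range.1 hj
      exact sub_neg_of_div_le_div (hw j (hj.trans hk)) (hw k hk) (hmono j k hj.le hk) hneg
    rw [Finset.sum_range_succ, nested, ih, add_sub_assoc]
    exact relu_add_eq_add_relu (Finset.sum_nonneg fun j _ => relu_nonneg _) hsum_eq_zero
end

section
/- Let w_1, w_2 > 0 and b_1, b_2 ∈ ℝ with b_1/w_1 ≥ b_2/w_2. Then for all y ∈ ℝ, σ(σ(w_1 y − b_1) + w_2 y − b_2) = σ(w_1 y − b_1) + σ(w_2 y − b_2), where σ(t) = max(t,0). -/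
/-- **Two-step ReLU collapsing.** For positive weights `w_1, w_2 > 0` with
`b_1/w_1 ≥ b_2/w_2`, for every `y ∈ ℝ`:
`σ(σ(w_1 y − b_1) + w_2 y − b_2) = σ(w_1 y − b_1) + σ(w_2 y − b_2)`, where `σ = max(·,0)`. -/
theorem relu_two_step (w₁ w₂ b₁ b₂ : ℝ) (hw₁ : 0 < w₁) (hw₂ : 0 < w₂)
    (h : b₂ / w₂ ≤ b₁ / w₁) (y : ℝ) :
    max (max (w₁ * y - b₁) 0 + w₂ * y - b₂) 0
      = max (w₁ * y - b₁) 0 + max (w₂ * y - b₂) 0 := by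
  rw [div_le_div_iff₀ hw₂ hw₁] at h
  rcases le_or_gt (w₁ * y - b₁) 0 with h1 | h1
  · rw [max_eq_right h1]
    simp [max_def]
  · have h2 : 0 < w₂ * y - b₂ := by nlinarith
    rw [max_eq_left h1.le, max_eq_left h2.le, max_eq_left (by linarith)]; ring
end
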